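/- Let l₀,…,l₄ be ℂ-linearly independent linear forms in R. Let M be the 6×6 skew-symmetric matrix over R with rows (0, l₀, l₁, 0, 0, 0), (−l₀, 0, l₂, 0, 0, 0), (−l₁, −l₂, 0, 0, 0, 0), (0, 0, 0, 0, l₂, l₃), (0, 0, 0, −l₂, 0, l₄), (0, 0, 0, −l₃, −l₄, 0), and let S be the 6×2 matrix over R with first column (l₂, −l₁, l₀, 0, 0, 0) and second column (0, 0, 0, l₄, −l₃, l₂). Then: (i) the kernel of the R-module homomorphism R⁶ → R², v ↦ Sᵀv, equals the image of the R-module homomorphism R⁶ → R⁶, v ↦ Mv; (ii) the ideal of R generated by the fifteen 2×2 minors of S equals the sub-Pfaffian ideal I₄(M). -/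

import Mathlib

open MvPolynomial Matrix

noncomputable section

/-- The polynomial ring `R = ℂ[x₀,…,x₄]`. -/
abbrev Rp : Type := MvPolynomial (Fin 5) ℂ

/-- The sub-Pfaffian `q_{αβ}(N)` of a `6 × 6` matrix: for `α < β` it is
`N_{ij}N_{kl} − N_{ik}N_{jl} + N_{il}N_{jk}` where `i < j < k < l` are the elements of
`{0,…,5} ∖ {α,β}`. -/
def subPf {A : Type*} [CommRing A] (N : Matrix (Fin 6) (Fin 6) A) (α β : Fin 6) : A :=
  match (List.finRange 6).filter (fun i => decide (i ≠ α) && decide (i ≠ β)) with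
  | [i, j, k, m] => N i j * N k m - N i k * N j m + N i m * N j k
  | _ => 0

/-- The Pfaffian of a `6 × 6` skew-symmetric matrix. -/
def pf {A : Type*} [CommRing A] (N : Matrix (Fin 6) (Fin 6) A) : A :=
  N 0 1 * subPf N 0 1 - N 0 2 * subPf N 0 2 + N 0 3 * subPf N 0 3
    - N 0 4 * subPf N 0 4 + N 0 5 * subPf N 0 5

/-- The sub-Pfaffian ideal `I₄(N)`, generated by the fifteen sub-Pfaffians. -/
def pfIdeal4 {A : Type*} [CommRing A] (N : Matrix (Fin 6) (Fin 6) A) : Ideal A :=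
  Ideal.span {x | ∃ α β : Fin 6, α < β ∧ x = subPf N α β}

/- ## Auxiliary lemmas -/

@[simp] lemma vecTail_const' {α : Type*} {n : ℕ} (a : α) :
    vecTail (fun _ : Fin (n + 1) => a) = fun _ : Fin n => a := rfl

@[simp] lemma cons_val_five' {α : Type*} (x : α) (u : Fin 5 → α) :
    vecCons x u (5 : Fin 6) = vecHead (vecTail (vecTail (vecTail (vecTail u)))) := rfl

lemma sp01 {A : Type*} [CommRing A] (N : Matrix (Fin 6) (Fin 6) A) :
    subPf N 0 1 = N 2 3 * N 4 5 - N 2 4 * N 3 5 + N 2 5 * N 3 4 := rfl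
lemma sp02 {A : Type*} [CommRing A] (N : Matrix (Fin 6) (Fin 6) A) :
    subPf N 0 2 = N 1 3 * N 4 5 - N 1 4 * N 3 5 + N 1 5 * N 3 4 := rfl
lemma sp03 {A : Type*} [CommRing A] (N : Matrix (Fin 6) (Fin 6) A) :
    subPf N 0 3 = N 1 2 * N 4 5 - N 1 4 * N 2 5 + N 1 5 * N 2 4 := rfl
lemma sp04 {A : Type*} [CommRing A] (N : Matrix (Fin 6) (Fin 6) A) :
    subPf N 0 4 = N 1 2 * N 3 5 - N 1 3 * N 2 5 + N 1 5 * N 2 3 := rfl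
lemma sp05 {A : Type*} [CommRing A] (N : Matrix (Fin 6) (Fin 6) A) :
    subPf N 0 5 = N 1 2 * N 3 4 - N 1 3 * N 2 4 + N 1 4 * N 2 3 := rfl
lemma sp12 {A : Type*} [CommRing A] (N : Matrix (Fin 6) (Fin 6) A) :
    subPf N 1 2 = N 0 3 * N 4 5 - N 0 4 * N 3 5 + N 0 5 * N 3 4 := rfl
lemma sp13 {A : Type*} [CommRing A] (N : Matrix (Fin 6) (Fin 6) A) :
    subPf N 1 3 = N 0 2 * N 4 5 - N 0 4 * N 2 5 + N 0 5 * N 2 4 := rfl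
lemma sp14 {A : Type*} [CommRing A] (N : Matrix (Fin 6) (Fin 6) A) :
    subPf N 1 4 = N 0 2 * N 3 5 - N 0 3 * N 2 5 + N 0 5 * N 2 3 := rfl
lemma sp15 {A : Type*} [CommRing A] (N : Matrix (Fin 6) (Fin 6) A) :
    subPf N 1 5 = N 0 2 * N 3 4 - N 0 3 * N 2 4 + N 0 4 * N 2 3 := rfl
lemma sp23 {A : Type*} [CommRing A] (N : Matrix (Fin 6) (Fin 6) A) :
    subPf N 2 3 = N 0 1 * N 4 5 - N 0 4 * N 1 5 + N 0 5 * N 1 4 := rfl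
lemma sp24 {A : Type*} [CommRing A] (N : Matrix (Fin 6) (Fin 6) A) :
    subPf N 2 4 = N 0 1 * N 3 5 - N 0 3 * N 1 5 + N 0 5 * N 1 3 := rfl
lemma sp25 {A : Type*} [CommRing A] (N : Matrix (Fin 6) (Fin 6) A) :
    subPf N 2 5 = N 0 1 * N 3 4 - N 0 3 * N 1 4 + N 0 4 * N 1 3 := rfl
lemma sp34 {A : Type*} [CommRing A] (N : Matrix (Fin 6) (Fin 6) A) :
    subPf N 3 4 = N 0 1 * N 2 5 - N 0 2 * N 1 5 + N 0 5 * N 1 2 := rfl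
lemma sp35 {A : Type*} [CommRing A] (N : Matrix (Fin 6) (Fin 6) A) :
    subPf N 3 5 = N 0 1 * N 2 4 - N 0 2 * N 1 4 + N 0 4 * N 1 2 := rfl
lemma sp45 {A : Type*} [CommRing A] (N : Matrix (Fin 6) (Fin 6) A) :
    subPf N 4 5 = N 0 1 * N 2 3 - N 0 2 * N 1 3 + N 0 3 * N 1 2 := rfl
/-- `X i` is regular mod the ideal generated by other variables. -/
lemma varKey (s : Set (Fin 5)) (i : Fin 5) (hi : i ∉ s) (p : Rp)
    (hp : X i * p ∈ Ideal.span (MvPolynomial.X '' s : Set Rp)) :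
    p ∈ Ideal.span (MvPolynomial.X '' s : Set Rp) := by
  rw [mem_ideal_span_X_image] at hp ⊢
  intro m hm
  have h1 : (Finsupp.single i 1 + m) ∈ (X i * p).support := by
    rw [mem_support_iff, coeff_X_mul]
    exact mem_support_iff.mp hm
  obtain ⟨j, hj, hij⟩ := hp _ h1
  refine ⟨j, hj, ?_⟩
  have hji : j ≠ i := fun h => hi (h ▸ hj)
  simpa [Finsupp.single_apply, hji.symm] using hij

def lin (P : Matrix (Fin 5) (Fin 5) ℂ) (i : Fin 5) : Rp := ∑ k, C (P i k) * X k

lemma aeval_lin (P Q : Matrix (Fin 5) (Fin 5) ℂ) (i : Fin 5) :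
    aeval (lin Q) (lin P i) = lin (P * Q) i := by
  simp only [lin, map_sum, _root_.map_mul, aeval_C, aeval_X, algebraMap_eq, Matrix.mul_apply,
    Finset.mul_sum, Finset.sum_mul, C_mul]
  rw [Finset.sum_comm]
  refine Finset.sum_congr rfl fun t _ => ?_
  refine Finset.sum_congr rfl fun j _ => ?_
  ring

lemma lin_one (i : Fin 5) : lin 1 i = X i := by
  simp [lin, Matrix.one_apply, apply_ite C, ite_mul, Finset.sum_ite_eq]

lemma deg_one_monomial (m : Fin 5 →₀ ℕ) (hm : m.degree = 1) :
    ∃ j, m = Finsupp.single j 1 := by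
  classical
  rw [Finsupp.degree_apply] at hm
  obtain ⟨j, hj, hrest⟩ : ∃ j ∈ m.support, ∀ k ∈ m.support, k ≠ j → m k = 0 := by
    rcases Finset.eq_empty_or_nonempty m.support with he | ⟨j, hj⟩
    · simp [he] at hm
    · refine ⟨j, hj, fun k hk hkj => ?_⟩
      by_contra hk0
      have h2 : 2 ≤ ∑ a ∈ m.support, m a := by
        have hk' : k ∈ m.support.erase j := Finset.mem_erase.mpr ⟨hkj, hk⟩
        have hmj : 1 ≤ m j := Nat.one_le_iff_ne_zero.mpr (Finsupp.mem_support_iff.mp hj)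
        have hmk : 1 ≤ m k := Nat.one_le_iff_ne_zero.mpr hk0
        calc 2 ≤ m j + m k := by omega
          _ ≤ m j + ∑ a ∈ m.support.erase j, m a := by
              have : m k ≤ ∑ a ∈ m.support.erase j, m a :=
                Finset.single_le_sum (fun _ _ => Nat.zero_le _) hk'
              omega
          _ = ∑ a ∈ m.support, m a := Finset.add_sum_erase _ m hj
      omega
  have hmj : m j = 1 := by
    have h5 : ∑ a ∈ m.support, m a = m j := by
      rw [← Finset.add_sum_erase _ m hj]
      have h6 : ∑ a ∈ m.support.erase j, m a = 0 :=
        Finset.sum_eq_zero fun k hk =>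
          hrest k (Finset.mem_of_mem_erase hk) (Finset.ne_of_mem_erase hk)
      omega
    omega
  refine ⟨j, ?_⟩
  ext k
  rcases eq_or_ne k j with rfl | hk
  · simp [hmj]
  · have : m k = 0 := by
      by_contra hk0
      exact hk0 (hrest k (Finsupp.mem_support_iff.mpr hk0) hk)
    simp [this, Finsupp.single_apply, hk, (Ne.symm hk)]

lemma l_decomp (p : Rp) (hp : p.IsHomogeneous 1) :
    p = ∑ j, C (coeff (Finsupp.single j 1) p) * X j := by
  ext m
  rw [coeff_sum]
  rcases eq_or_ne m.degree 1 with hm | hm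
  · obtain ⟨j, rfl⟩ := deg_one_monomial m hm
    rw [Finset.sum_eq_single j]
    · simp [coeff_C_mul, coeff_X']
    · intro k _ hkj
      rw [coeff_C_mul, coeff_X']
      have : ¬ Finsupp.single k 1 = Finsupp.single j 1 := by
        simp [Finsupp.single_left_inj (by norm_num : (1:ℕ) ≠ 0), hkj]
      simp [this]
    · intro h; exact absurd (Finset.mem_univ j) h
  · rw [hp.coeff_eq_zero hm]
    symm
    apply Finset.sum_eq_zero
    intro j _
    rw [coeff_C_mul, coeff_X']
    have : ¬ Finsupp.single j 1 = m := fun h =>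
      hm (by subst h; simp [Finsupp.degree_apply, Finsupp.support_single_ne_zero])
    simp [this]

lemma exists_auto (l : Fin 5 → Rp) (hl : ∀ i, (l i).IsHomogeneous 1)
    (hind : LinearIndependent ℂ l) :
    ∃ (ψ φ : Rp →ₐ[ℂ] Rp), (∀ p, φ (ψ p) = p) ∧ (∀ i, ψ (l i) = X i) ∧ (∀ i, φ (X i) = l i) := by
  set A : Matrix (Fin 5) (Fin 5) ℂ := fun i j => coeff (Finsupp.single j 1) (l i) with hA
  have hlA : ∀ i, l i = lin A i := fun i => l_decomp (l i) (hl i)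
  have hU : IsUnit A := by
    rw [← Matrix.linearIndependent_rows_iff_isUnit]
    rw [Fintype.linearIndependent_iff] at hind ⊢
    intro g hg
    have h0 : ∀ j, ∑ i, g i * A i j = 0 := by
      intro j
      have := congrFun hg j
      simpa using this
    apply hind
    calc ∑ i, g i • l i = ∑ j : Fin 5, C (∑ i, g i * A i j) * X j := by
          simp only [hlA, lin, Finset.smul_sum, smul_eq_C_mul, map_sum, Finset.sum_mul]
          rw [Finset.sum_comm]
          refine Finset.sum_congr rfl fun j _ => ?_
          exact Finset.sum_congr rfl fun i _ => by rw [C_mul]; ring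
      _ = 0 := by simp [h0]
  have hdet : IsUnit A.det := (Matrix.isUnit_iff_isUnit_det A).mp hU
  set B := A⁻¹ with hB
  have hAB : A * B = 1 := Matrix.mul_nonsing_inv A hdet
  have hBA : B * A = 1 := Matrix.nonsing_inv_mul A hdet
  refine ⟨aeval (lin B), aeval (lin A), ?_, ?_, ?_⟩
  · intro p
    have : (aeval (lin A)).comp (aeval (lin B)) = AlgHom.id ℂ Rp := by
      apply MvPolynomial.algHom_ext
      intro t
      simp only [AlgHom.comp_apply, aeval_X, AlgHom.id_apply]
      rw [aeval_lin, hBA, lin_one]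
    exact AlgHom.congr_fun this p
  · intro i
    rw [hlA, aeval_lin, hAB, lin_one]
  · intro i
    rw [aeval_X, ← hlA]

lemma keyPair (l : Fin 5 → Rp) (hl : ∀ i, (l i).IsHomogeneous 1)
    (hind : LinearIndependent ℂ l) (i j k : Fin 5) (hij : i ≠ j) (hik : i ≠ k)
    (p : Rp) (hp : l i * p ∈ Ideal.span {l j, l k}) : p ∈ Ideal.span {l j, l k} := by
  obtain ⟨ψ, φ, hφψ, hψl, hφX⟩ := exists_auto l hl hind
  obtain ⟨u, v, huv⟩ := Ideal.mem_span_pair.mp hp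
  have h1 : X i * ψ p ∈ Ideal.span (MvPolynomial.X '' {j, k} : Set Rp) := by
    rw [Set.image_insert_eq, Set.image_singleton]
    refine Ideal.mem_span_pair.mpr ⟨ψ u, ψ v, ?_⟩
    have := congrArg ψ huv
    simpa only [map_add, _root_.map_mul, hψl] using this
  have h2 := varKey {j, k} i (by simp [hij, hik]) (ψ p) h1
  rw [Set.image_insert_eq, Set.image_singleton] at h2
  obtain ⟨q1, q2, hq⟩ := Ideal.mem_span_pair.mp h2
  refine Ideal.mem_span_pair.mpr ⟨φ q1, φ q2, ?_⟩
  have := congrArg φ hq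
  simpa only [map_add, _root_.map_mul, hφX, hφψ] using this

lemma keySingle (l : Fin 5 → Rp) (hl : ∀ i, (l i).IsHomogeneous 1)
    (hind : LinearIndependent ℂ l) (i k : Fin 5) (hik : i ≠ k)
    (p : Rp) (hp : l i * p ∈ Ideal.span {l k}) : p ∈ Ideal.span {l k} := by
  obtain ⟨ψ, φ, hφψ, hψl, hφX⟩ := exists_auto l hl hind
  obtain ⟨u, huv⟩ := Ideal.mem_span_singleton'.mp hp
  have h1 : X i * ψ p ∈ Ideal.span (MvPolynomial.X '' {k} : Set Rp) := by
    rw [Set.image_singleton]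
    refine Ideal.mem_span_singleton'.mpr ⟨ψ u, ?_⟩
    have := congrArg ψ huv
    simpa only [_root_.map_mul, hψl] using this
  have h2 := varKey {k} i (by simp [hik]) (ψ p) h1
  rw [Set.image_singleton] at h2
  obtain ⟨q1, hq⟩ := Ideal.mem_span_singleton'.mp h2
  refine Ideal.mem_span_singleton'.mpr ⟨φ q1, ?_⟩
  have := congrArg φ hq
  simpa only [_root_.map_mul, hφX, hφψ] using this

lemma block (a b c : Rp)
    (h1 : ∀ p, a * p ∈ Ideal.span {b, c} → p ∈ Ideal.span {b, c})
    (h2 : ∀ p, b * p ∈ Ideal.span {c} → p ∈ Ideal.span {c})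
    (hc : c ≠ 0) (w0 w1 w2 : Rp) (hw : c * w0 - b * w1 + a * w2 = 0) :
    ∃ v0 v1 v2 : Rp, a * v1 + b * v2 = w0 ∧ -(a * v0) + c * v2 = w1 ∧ -(b * v0) - c * v1 = w2 := by
  have hw2 : w2 ∈ Ideal.span {b, c} :=
    h1 w2 (Ideal.mem_span_pair.mpr ⟨w1, -w0, by linear_combination -hw⟩)
  obtain ⟨α, β, hαβ⟩ := Ideal.mem_span_pair.mp hw2
  have h3 : b * (w1 - α * a) ∈ Ideal.span {c} :=
    Ideal.mem_span_singleton'.mpr ⟨w0 + β * a, by linear_combination hw + a * hαβ⟩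
  obtain ⟨u, hu⟩ := Ideal.mem_span_singleton'.mp (h2 _ h3)
  have hw0 : w0 = u * b - β * a := by
    have hcc : c * (w0 + β * a - u * b) = 0 := by linear_combination hw + a * hαβ - b * hu
    rcases mul_eq_zero.mp hcc with h | h
    · exact absurd h hc
    · linear_combination h
  exact ⟨-α, -β, u, by linear_combination -hw0, by linear_combination hu,
    by linear_combination hαβ⟩

set_option maxHeartbeats 1600000 in
/-- Proposition 1.2, case (b). -/
theorem type_b_syzygy_and_minors
    (l : Fin 5 → Rp) (hl : ∀ i, (l i).IsHomogeneous 1) (hind : LinearIndependent ℂ l)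
    (M : Matrix (Fin 6) (Fin 6) Rp)
    (hM : M = !![0, l 0, l 1, 0, 0, 0;
                 -l 0, 0, l 2, 0, 0, 0;
                 -l 1, -l 2, 0, 0, 0, 0;
                 0, 0, 0, 0, l 2, l 3;
                 0, 0, 0, -l 2, 0, l 4;
                 0, 0, 0, -l 3, -l 4, 0])
    (S : Matrix (Fin 6) (Fin 2) Rp)
    (hS : S = !![l 2, 0;
                 -l 1, 0;
                 l 0, 0;
                 0, l 4;
                 0, -l 3;
                 0, l 2]) :
    LinearMap.ker (Matrix.mulVecLin Sᵀ) = LinearMap.range (Matrix.mulVecLin M) ∧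
    Ideal.span {x | ∃ i j : Fin 6, i < j ∧ x = S i 0 * S j 1 - S i 1 * S j 0}
      = pfIdeal4 M := by
  subst hM hS
  have key : ∀ i j : Fin 6, i < j →
      (!![l 2, 0; -l 1, 0; l 0, 0; 0, l 4; 0, -l 3; 0, l 2] : Matrix (Fin 6) (Fin 2) Rp) i 0 *
      (!![l 2, 0; -l 1, 0; l 0, 0; 0, l 4; 0, -l 3; 0, l 2] : Matrix (Fin 6) (Fin 2) Rp) j 1 -
      (!![l 2, 0; -l 1, 0; l 0, 0; 0, l 4; 0, -l 3; 0, l 2] : Matrix (Fin 6) (Fin 2) Rp) i 1 *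
      (!![l 2, 0; -l 1, 0; l 0, 0; 0, l 4; 0, -l 3; 0, l 2] : Matrix (Fin 6) (Fin 2) Rp) j 0
      = (-1 : Rp) ^ ((i : ℕ) + (j : ℕ) + 1) *
        subPf !![0, l 0, l 1, 0, 0, 0;
                 -l 0, 0, l 2, 0, 0, 0;
                 -l 1, -l 2, 0, 0, 0, 0;
                 0, 0, 0, 0, l 2, l 3;
                 0, 0, 0, -l 2, 0, l 4;
                 0, 0, 0, -l 3, -l 4, 0] i j := by
    intro i j hij
    fin_cases i <;> fin_cases j <;>
      first
      | exact absurd hij (by decide)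
      | (simp only [Fin.zero_eta, Fin.mk_one, Fin.reduceFinMk]
         simp only [sp01, sp02, sp03, sp04, sp05, sp12, sp13, sp14, sp15, sp23, sp24, sp25,
           sp34, sp35, sp45]
         simp [Matrix.head_fin_const]
         try ring)
  constructor
  · apply le_antisymm
    · intro w hw
      rw [LinearMap.mem_ker, mulVecLin_apply] at hw
      have e1 := congrFun hw 0
      have e2 := congrFun hw 1
      simp [Matrix.mulVec, dotProduct, Fin.sum_univ_six, Matrix.transpose_apply,
        Matrix.head_fin_const] at e1 e2
      obtain ⟨v0, v1, v2, ha1, ha2, ha3⟩ :=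
        block (l 0) (l 1) (l 2)
          (fun p => keyPair l hl hind 0 1 2 (by decide) (by decide) p)
          (fun p => keySingle l hl hind 1 2 (by decide) p)
          (hind.ne_zero 2) (w 0) (w 1) (w 2) (by linear_combination e1)
      obtain ⟨v3, v4, v5, hb1, hb2, hb3⟩ :=
        block (l 2) (l 3) (l 4)
          (fun p => keyPair l hl hind 2 3 4 (by decide) (by decide) p)
          (fun p => keySingle l hl hind 3 4 (by decide) p)
          (hind.ne_zero 4) (w 3) (w 4) (w 5) (by linear_combination e2)
      refine ⟨![v0, v1, v2, v3, v4, v5], ?_⟩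
      rw [mulVecLin_apply]
      funext i
      fin_cases i <;>
        (simp [Matrix.mulVec, dotProduct, Fin.sum_univ_six, Matrix.head_fin_const]) <;>
        first
        | linear_combination ha1
        | linear_combination ha2
        | linear_combination ha3
        | linear_combination hb1
        | linear_combination hb2
        | linear_combination hb3
    · rintro x ⟨v, rfl⟩
      rw [LinearMap.mem_ker, mulVecLin_apply, mulVecLin_apply, Matrix.mulVec_mulVec]
      have hz : (!![l 2, 0; -l 1, 0; l 0, 0; 0, l 4; 0, -l 3; 0, l 2]ᵀ *
          !![0, l 0, l 1, 0, 0, 0;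
             -l 0, 0, l 2, 0, 0, 0;
             -l 1, -l 2, 0, 0, 0, 0;
             0, 0, 0, 0, l 2, l 3;
             0, 0, 0, -l 2, 0, l 4;
             0, 0, 0, -l 3, -l 4, 0] : Matrix (Fin 2) (Fin 6) Rp) = 0 := by
        refine Matrix.ext fun i j => ?_
        rw [Matrix.mul_apply]
        simp only [Matrix.transpose_apply, Matrix.zero_apply]
        fin_cases i <;> fin_cases j <;>
          (simp [Fin.sum_univ_six, Matrix.head_fin_const]; try ring)
      rw [hz, Matrix.zero_mulVec]
  · -- part (ii)
    apply le_antisymm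
    · rw [Ideal.span_le]
      rintro x ⟨i, j, hij, rfl⟩
      rw [key i j hij]
      exact Ideal.mul_mem_left _ _ (Ideal.subset_span ⟨i, j, hij, rfl⟩)
    · rw [pfIdeal4, Ideal.span_le]
      rintro x ⟨a, b, hab, rfl⟩
      have hcc : ((-1 : Rp) ^ ((a : ℕ) + (b : ℕ) + 1)) * ((-1 : Rp) ^ ((a : ℕ) + (b : ℕ) + 1))
          = 1 := by
        rw [← pow_add]
        exact Even.neg_one_pow ⟨(a : ℕ) + (b : ℕ) + 1, rfl⟩
      have hq : subPf !![0, l 0, l 1, 0, 0, 0;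
                 -l 0, 0, l 2, 0, 0, 0;
                 -l 1, -l 2, 0, 0, 0, 0;
                 0, 0, 0, 0, l 2, l 3;
                 0, 0, 0, -l 2, 0, l 4;
                 0, 0, 0, -l 3, -l 4, 0] a b = (-1 : Rp) ^ ((a : ℕ) + (b : ℕ) + 1) *
          ((!![l 2, 0; -l 1, 0; l 0, 0; 0, l 4; 0, -l 3; 0, l 2] : Matrix (Fin 6) (Fin 2) Rp) a 0 *
           (!![l 2, 0; -l 1, 0; l 0, 0; 0, l 4; 0, -l 3; 0, l 2] : Matrix (Fin 6) (Fin 2) Rp) b 1 -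
           (!![l 2, 0; -l 1, 0; l 0, 0; 0, l 4; 0, -l 3; 0, l 2] : Matrix (Fin 6) (Fin 2) Rp) a 1 *
           (!![l 2, 0; -l 1, 0; l 0, 0; 0, l 4; 0, -l 3; 0, l 2] : Matrix (Fin 6) (Fin 2) Rp) b 0)
          := by
        rw [key a b hab, ← mul_assoc, hcc, one_mul]
      rw [hq]
      exact Ideal.mul_mem_left _ _ (Ideal.subset_span ⟨a, b, hab, rfl⟩)
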